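/- G(Σ, e) is the internal direct sum B₀ ⊕ B₁ ⊕ ⋯ ⊕ B_{2^ν−1}, where: B₀ := ⟨Ψ_𝔰⟩ for any fixed 𝔰 ∈ Σ₂ is cyclic of order m; for 1 ≤ k ≤ 2^{ν−1}, B_{2k−1} := ⟨v_{2k−1}⟩ with v_{2k−1} := Ψ_{t_{2k−1}} − Ψ_{t_{2k}} is cyclic of order 3; and for 1 ≤ k ≤ 2^{ν−1} − 1, B_{2k} := ⟨v_{2k}⟩ with v_{2k} := Ψ_{t_{2k−1}} + Ψ_{t_{2k}} − Ψ_t − Ψ_{t'} is cyclic of order 3. In particular G(Σ, e) is isomorphic to ℤ/mℤ ⊕ (ℤ/3ℤ)^{2^ν−1}. -/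

import Mathlib

/-- The subgroup of relations: `e s • ψ s - e t • ψ t` for all `s t`, together with
`∑ s, ψ s`. -/
noncomputable def relSub {S : Type*} [Fintype S] (e : S → ℤ) : AddSubgroup (S →₀ ℤ) :=
  AddSubgroup.closure
    ({x | ∃ s t : S, x = Finsupp.single s (e s) - Finsupp.single t (e t)} ∪
      {∑ s : S, Finsupp.single s 1})

/-- `G(Σ, e)`: the quotient of the free abelian group on `Σ` by the relations. -/
abbrev CompGrp {S : Type*} [Fintype S] (e : S → ℤ) : Type _ :=
  (S →₀ ℤ) ⧸ relSub e

/-- `Ψ s`: the image of the basis element `ψ s` in `G(Σ, e)`. -/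
noncomputable def Psi {S : Type*} [Fintype S] (e : S → ℤ) (s : S) : CompGrp e :=
  QuotientAddGroup.mk (Finsupp.single s 1)

/-- `Σ = Σ₂ ⊔ Σ₆` with `#Σ₂ = s₂` and `#Σ₆ = 2^ν`. -/
abbrev Sig2 (s₂ ν : ℕ) : Type := Fin s₂ ⊕ Fin (2 ^ ν)

/-- `e ≡ 1` on `Σ₂` and `e ≡ 3` on `Σ₆`. -/
def e2 (s₂ ν : ℕ) : Sig2 s₂ ν → ℤ := Sum.elim (fun _ => 1) (fun _ => 3)

/-- `t i` (`1`-based): the `i`-th point of `Σ₆ = {t_1, …, t_{2^ν}}`. -/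
def tPt (s₂ ν : ℕ) (i : ℕ) : Sig2 s₂ ν :=
  Sum.inr ⟨(i - 1) % 2 ^ ν, Nat.mod_lt _ (Nat.pow_pos (by norm_num))⟩

/-- The generators `v_j` (`1`-based, `v_0 := Ψ 𝔰`):
`v_{2k-1} = Ψ t_{2k-1} - Ψ t_{2k}` and `v_{2k} = Ψ t_{2k-1} + Ψ t_{2k} - Ψ t - Ψ t'`,
where `t = t_{2^ν - 1}` and `t' = t_{2^ν}`. -/
noncomputable def vGen (s₂ ν : ℕ) (𝔰 : Fin s₂) : ℕ → CompGrp (e2 s₂ ν) := fun j =>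
  if j = 0 then Psi (e2 s₂ ν) (Sum.inl 𝔰)
  else if j % 2 = 1 then
    Psi (e2 s₂ ν) (tPt s₂ ν j) - Psi (e2 s₂ ν) (tPt s₂ ν (j + 1))
  else
    Psi (e2 s₂ ν) (tPt s₂ ν (j - 1)) + Psi (e2 s₂ ν) (tPt s₂ ν j)
      - Psi (e2 s₂ ν) (tPt s₂ ν (2 ^ ν - 1)) - Psi (e2 s₂ ν) (tPt s₂ ν (2 ^ ν))

/-! Write `A = Ψ_𝔰` and `w_i = Ψ_{t_i}`. The relations say `3 w_i = A` and `s₂ A + ∑ w_i = 0`,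
hence `m A = 0` and `3 v_j = 0` for `j ≥ 1`. The `v_j` generate `G(Σ, e)`: for odd `j`,
`v_j + v_{j+1} + v_{2^ν-1} = 2 (w_j - w_{2^ν})` while `3 (w_j - w_{2^ν}) = 0`, so every
`w_i - w_{2^ν}` lies in their span; summing these gives `2^ν w_{2^ν}`, which together with
`3 w_{2^ν} = A` puts `w_{2^ν}` in the span as `gcd(2^ν, 3) = 1`. Hence `#G ≤ m · 3^{2^ν-1}`.
Conversely `A ↦ (3, 0)`, `w_i ↦ (1, e_i)` (with `e_{2^ν} = -(1, …, 1)`) is a well-defined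
surjection onto `ℤ/m × (ℤ/3)^{2^ν-1}`, so every bound is an equality: the orders are exactly
`m` and `3`, the sum is direct, and the surjection is an isomorphism. -/

open Finset

theorem AddSubgroup.mem_of_zsmul_mem_of_isCoprime {G : Type*} [AddGroup G] {H : AddSubgroup G}
    {x : G} {a b : ℤ} (hab : IsCoprime a b) (ha : a • x ∈ H) (hb : b • x ∈ H) : x ∈ H := by
  obtain ⟨u, w, huw⟩ := hab
  have hx : x = u • a • x + w • b • x := by
    rw [smul_smul, smul_smul, ← add_zsmul, huw, one_zsmul]
  rw [hx]
  exact add_mem (zsmul_mem ha u) (zsmul_mem hb w)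

theorem DirectSum.coeAddMonoidHom_zmultiples_surjective {ι G : Type*} [DecidableEq ι]
    [AddCommGroup G] (v : ι → G) (hspan : AddSubgroup.closure (Set.range v) = ⊤) :
    Function.Surjective (DirectSum.coeAddMonoidHom fun i => AddSubgroup.zmultiples (v i)) := by
  rw [← AddMonoidHom.range_eq_top, eq_top_iff, ← hspan, AddSubgroup.closure_le]
  rintro _ ⟨i, rfl⟩
  exact ⟨DirectSum.of _ i ⟨v i, AddSubgroup.mem_zmultiples _⟩, DirectSum.coeAddMonoidHom_of _ _ _⟩

theorem DirectSum.isInternal_zmultiples_of_surjective {ι G T : Type*} [Fintype ι]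
    [DecidableEq ι] [AddCommGroup G] [Finite T] (v : ι → G) (N : ι → ℕ) (hN : ∀ i, N i ≠ 0)
    (hv : ∀ i, N i • v i = 0) (hspan : AddSubgroup.closure (Set.range v) = ⊤)
    (f : G → T) (hf : Function.Surjective f) (hcard : Nat.card T = ∏ i, N i) :
    DirectSum.IsInternal (fun i => AddSubgroup.zmultiples (v i)) ∧
      (∀ i, addOrderOf (v i) = N i) ∧ Function.Bijective f := by
  set B := fun i => AddSubgroup.zmultiples (v i)
  have hdvd (i : ι) : addOrderOf (v i) ∣ N i := addOrderOf_dvd_of_nsmul_eq_zero (hv i)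
  have hpos (i : ι) : 0 < addOrderOf (v i) :=
    Nat.pos_of_dvd_of_pos (hdvd i) (Nat.pos_of_ne_zero (hN i))
  have hle : ∀ i ∈ univ, addOrderOf (v i) ≤ N i :=
    fun i _ => Nat.le_of_dvd (Nat.pos_of_ne_zero (hN i)) (hdvd i)
  have (i : ι) : Finite (B i) :=
    Nat.finite_of_card_ne_zero (by rw [Nat.card_zmultiples]; exact (hpos i).ne')
  let prodEquiv := DirectSum.addEquivProd fun i => B i
  have : Finite (DirectSum ι fun i => B i) := Finite.of_equiv _ prodEquiv.symm.toEquiv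
  have hcardSum : Nat.card (DirectSum ι fun i => B i) = ∏ i, addOrderOf (v i) := by
    simp only [Nat.card_congr prodEquiv.toEquiv, Nat.card_pi, B, Nat.card_zmultiples]
  have hsurj := DirectSum.coeAddMonoidHom_zmultiples_surjective v hspan
  have : Finite G := Finite.of_surjective _ hsurj
  have hcardG : Nat.card G ≤ ∏ i, addOrderOf (v i) :=
    hcardSum ▸ Nat.card_le_card_of_surjective _ hsurj
  have hcardT : Nat.card T ≤ Nat.card G := Nat.card_le_card_of_surjective f hf
  have hprod : ∏ i, addOrderOf (v i) = ∏ i, N i :=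
    le_antisymm (prod_le_prod' hle) (hcard ▸ hcardT.trans hcardG)
  have hord (i : ι) : addOrderOf (v i) = N i := by
    by_contra hne
    refine (prod_lt_prod (fun i _ => hpos i) hle ⟨i, mem_univ i, ?_⟩).ne hprod
    exact lt_of_le_of_ne (hle i (mem_univ i)) hne
  refine ⟨(Nat.bijective_iff_surjective_and_card _).2 ⟨hsurj, ?_⟩, hord,
    (Nat.bijective_iff_surjective_and_card _).2 ⟨hf, ?_⟩⟩ <;> omega

theorem isCoprime_two_pow_three (ν : ℕ) : IsCoprime ((2 ^ ν : ℕ) : ℤ) 3 := by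
  rw [Nat.cast_pow]
  exact IsCoprime.pow_left ⟨-1, 1, by norm_num⟩

namespace CompGrp

variable {S : Type*} [Fintype S] (e : S → ℤ)

theorem zsmul_Psi (k : ℤ) (s : S) :
    k • Psi e s = QuotientAddGroup.mk (Finsupp.single s k) := by
  rw [Psi, ← QuotientAddGroup.mk_zsmul, Finsupp.smul_single_one]

theorem zsmul_Psi_eq (s t : S) : e s • Psi e s = e t • Psi e t := by
  rw [zsmul_Psi, zsmul_Psi, eq_comm, QuotientAddGroup.eq_iff_sub_mem]
  exact AddSubgroup.subset_closure (Or.inl ⟨t, s, rfl⟩)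

theorem sum_Psi : ∑ s, Psi e s = 0 := by
  simp only [Psi, ← QuotientAddGroup.mk_sum, QuotientAddGroup.eq_zero_iff]
  exact AddSubgroup.subset_closure (Or.inr rfl)

theorem closure_range_Psi : AddSubgroup.closure (Set.range (Psi e)) = ⊤ := by
  refine eq_top_iff.2 fun g _ => QuotientAddGroup.induction_on g fun x => ?_
  induction x using Finsupp.induction_linear with
  | zero => exact zero_mem _
  | add f g hf hg => exact add_mem hf hg
  | single s k =>
    rw [← zsmul_Psi]
    exact zsmul_mem (AddSubgroup.subset_closure (Set.mem_range_self s)) k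

variable {T : Type*} [AddCommGroup T]

noncomputable def lift (p : S → T) (hp : ∀ s t, e s • p s = e t • p t)
    (hsum : ∑ s, p s = 0) : CompGrp e →+ T :=
  QuotientAddGroup.lift _ (Finsupp.liftAddHom fun s => zmultiplesHom T (p s)) <| by
    rw [relSub, AddSubgroup.closure_le]
    rintro x (⟨s, t, rfl⟩ | rfl)
    · simp only [SetLike.mem_coe, AddMonoidHom.mem_ker, map_sub,
        Finsupp.liftAddHom_apply_single, zmultiplesHom_apply, hp s t, sub_self]
    · simpa using hsum

@[simp]
theorem lift_Psi (p : S → T) (hp : ∀ s t, e s • p s = e t • p t) (hsum : ∑ s, p s = 0)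
    (s : S) : lift e p hp hsum (Psi e s) = p s := by
  simp [lift, Psi]

end CompGrp

namespace Sig2

variable {s₂ ν : ℕ}

@[simp]
theorem e2_inl (a : Fin s₂) : e2 s₂ ν (Sum.inl a) = 1 := rfl

@[simp]
theorem e2_tPt (i : ℕ) : e2 s₂ ν (tPt s₂ ν i) = 3 := rfl

noncomputable def psiT (s₂ ν : ℕ) (i : ℕ) : CompGrp (e2 s₂ ν) := Psi (e2 s₂ ν) (tPt s₂ ν i)

theorem Psi_inr_eq_psiT (k : Fin (2 ^ ν)) : Psi (e2 s₂ ν) (Sum.inr k) = psiT s₂ ν (k + 1) := by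
  simp [psiT, tPt, Nat.mod_eq_of_lt k.isLt]

theorem Psi_inl_eq (a b : Fin s₂) : Psi (e2 s₂ ν) (Sum.inl a) = Psi (e2 s₂ ν) (Sum.inl b) := by
  simpa only [e2_inl, one_zsmul] using CompGrp.zsmul_Psi_eq (e2 s₂ ν) (Sum.inl a) (Sum.inl b)

theorem three_zsmul_psiT (𝔰 : Fin s₂) (i : ℕ) :
    (3 : ℤ) • psiT s₂ ν i = Psi (e2 s₂ ν) (Sum.inl 𝔰) := by
  simpa only [e2_tPt, e2_inl, one_zsmul, psiT] using
    CompGrp.zsmul_Psi_eq (e2 s₂ ν) (tPt s₂ ν i) (Sum.inl 𝔰)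

theorem sum_Psi_inr (𝔰 : Fin s₂) :
    ∑ k : Fin (2 ^ ν), Psi (e2 s₂ ν) (Sum.inr k) = -((s₂ : ℤ) • Psi (e2 s₂ ν) (Sum.inl 𝔰)) := by
  have h := CompGrp.sum_Psi (e2 s₂ ν)
  rw [Fintype.sum_sum_type, sum_congr rfl fun a _ => Psi_inl_eq a 𝔰, sum_const, card_univ,
    Fintype.card_fin, ← natCast_zsmul] at h
  exact eq_neg_of_add_eq_zero_right h

theorem vGen_zero (𝔰 : Fin s₂) : vGen s₂ ν 𝔰 0 = Psi (e2 s₂ ν) (Sum.inl 𝔰) := by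
  simp [vGen]

theorem vGen_of_odd (𝔰 : Fin s₂) {j : ℕ} (hj : j % 2 = 1) :
    vGen s₂ ν 𝔰 j = psiT s₂ ν j - psiT s₂ ν (j + 1) := by
  simp [vGen, psiT, hj, show j ≠ 0 by omega]

theorem vGen_of_even (𝔰 : Fin s₂) {j : ℕ} (hj0 : j ≠ 0) (hj : j % 2 = 0) :
    vGen s₂ ν 𝔰 j = psiT s₂ ν (j - 1) + psiT s₂ ν j
      - psiT s₂ ν (2 ^ ν - 1) - psiT s₂ ν (2 ^ ν) := by
  simp [vGen, psiT, hj, hj0]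

theorem three_zsmul_vGen (𝔰 : Fin s₂) {j : ℕ} (hj0 : j ≠ 0) : (3 : ℤ) • vGen s₂ ν 𝔰 j = 0 := by
  rcases Nat.mod_two_eq_zero_or_one j with hj | hj
  · simp only [vGen_of_even 𝔰 hj0 hj, zsmul_sub, zsmul_add, three_zsmul_psiT 𝔰]
    abel
  · simp only [vGen_of_odd 𝔰 hj, zsmul_sub, three_zsmul_psiT 𝔰, sub_self]

theorem card_nsmul_Psi_inl (𝔰 : Fin s₂) : (3 * s₂ + 2 ^ ν) • Psi (e2 s₂ ν) (Sum.inl 𝔰) = 0 := by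
  have h3 : ∀ k : Fin (2 ^ ν), Psi (e2 s₂ ν) (Sum.inl 𝔰) = (3 : ℤ) • Psi (e2 s₂ ν) (Sum.inr k) :=
    fun k => by rw [Psi_inr_eq_psiT, three_zsmul_psiT 𝔰]
  have hL : ∑ k : Fin (2 ^ ν), (3 : ℤ) • Psi (e2 s₂ ν) (Sum.inr k)
      = (2 ^ ν) • Psi (e2 s₂ ν) (Sum.inl 𝔰) := by
    simp only [← h3, sum_const, card_univ, Fintype.card_fin]
  rw [← smul_sum, sum_Psi_inr 𝔰, smul_neg, smul_smul] at hL
  rw [add_smul, ← hL, ← natCast_zsmul]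
  push_cast
  exact add_neg_cancel _

theorem psiT_sub_psiT_last_mem_of_odd (𝔰 : Fin s₂) {H : AddSubgroup (CompGrp (e2 s₂ ν))}
    (hv : ∀ j < 2 ^ ν, vGen s₂ ν 𝔰 j ∈ H) {i : ℕ} (hi : i % 2 = 1) (hiL : i ≤ 2 ^ ν) :
    psiT s₂ ν i - psiT s₂ ν (2 ^ ν) ∈ H := by
  obtain hiL | hiL | hiL : i = 2 ^ ν ∨ i + 1 = 2 ^ ν ∨ i + 1 < 2 ^ ν := by omega
  · rw [hiL, sub_self]
    exact zero_mem H
  · have hv' := vGen_of_odd (ν := ν) 𝔰 hi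
    rw [hiL] at hv'
    exact hv' ▸ hv i (by omega)
  have hLeven : 2 ∣ 2 ^ ν := dvd_pow_self 2 fun hν => by simp [hν] at hiL
  have hsum : vGen s₂ ν 𝔰 i + vGen s₂ ν 𝔰 (i + 1) + vGen s₂ ν 𝔰 (2 ^ ν - 1)
      = (2 : ℤ) • (psiT s₂ ν i - psiT s₂ ν (2 ^ ν)) := by
    rw [vGen_of_odd 𝔰 hi, vGen_of_even 𝔰 (by omega) (by omega),
      vGen_of_odd 𝔰 (by omega : (2 ^ ν - 1) % 2 = 1), Nat.add_sub_cancel,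
      Nat.sub_add_cancel Nat.one_le_two_pow]
    abel
  have h3 : (3 : ℤ) • (psiT s₂ ν i - psiT s₂ ν (2 ^ ν)) = 0 := by
    rw [zsmul_sub, three_zsmul_psiT 𝔰, three_zsmul_psiT 𝔰, sub_self]
  have hdiff : psiT s₂ ν i - psiT s₂ ν (2 ^ ν)
      = (3 : ℤ) • (psiT s₂ ν i - psiT s₂ ν (2 ^ ν))
        - (2 : ℤ) • (psiT s₂ ν i - psiT s₂ ν (2 ^ ν)) := by
    abel
  rw [hdiff, h3, ← hsum, zero_sub]
  exact neg_mem (add_mem (add_mem (hv _ (by omega)) (hv _ (by omega))) (hv _ (by omega)))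

theorem psiT_sub_psiT_last_mem (𝔰 : Fin s₂) {H : AddSubgroup (CompGrp (e2 s₂ ν))}
    (hv : ∀ j < 2 ^ ν, vGen s₂ ν 𝔰 j ∈ H) {i : ℕ} (hi : 1 ≤ i) (hiL : i ≤ 2 ^ ν) :
    psiT s₂ ν i - psiT s₂ ν (2 ^ ν) ∈ H := by
  rcases Nat.mod_two_eq_zero_or_one i with heven | hodd
  · have hv' := vGen_of_odd (ν := ν) 𝔰 (j := i - 1) (by omega)
    rw [Nat.sub_add_cancel hi] at hv'
    have hdiff : psiT s₂ ν i - psiT s₂ ν (2 ^ ν)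
        = (psiT s₂ ν (i - 1) - psiT s₂ ν (2 ^ ν)) - vGen s₂ ν 𝔰 (i - 1) := by
      rw [hv']
      abel
    rw [hdiff]
    exact sub_mem (psiT_sub_psiT_last_mem_of_odd 𝔰 hv (by omega) (by omega)) (hv _ (by omega))
  · exact psiT_sub_psiT_last_mem_of_odd 𝔰 hv hodd hiL

theorem closure_range_vGen (𝔰 : Fin s₂) :
    AddSubgroup.closure (Set.range fun i : Fin (2 ^ ν) => vGen s₂ ν 𝔰 i) = ⊤ := by
  set H := AddSubgroup.closure (Set.range fun i : Fin (2 ^ ν) => vGen s₂ ν 𝔰 i)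
  have hv (j : ℕ) (hj : j < 2 ^ ν) : vGen s₂ ν 𝔰 j ∈ H :=
    AddSubgroup.subset_closure ⟨⟨j, hj⟩, rfl⟩
  have hA : Psi (e2 s₂ ν) (Sum.inl 𝔰) ∈ H := vGen_zero 𝔰 ▸ hv 0 (Nat.two_pow_pos ν)
  have hdiff (k : Fin (2 ^ ν)) : Psi (e2 s₂ ν) (Sum.inr k) - psiT s₂ ν (2 ^ ν) ∈ H := by
    rw [Psi_inr_eq_psiT]
    exact psiT_sub_psiT_last_mem 𝔰 hv (by omega) k.isLt
  have hlast : psiT s₂ ν (2 ^ ν) ∈ H := by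
    refine AddSubgroup.mem_of_zsmul_mem_of_isCoprime (isCoprime_two_pow_three ν) ?_
      (by rw [three_zsmul_psiT 𝔰]; exact hA)
    have hsum : ((2 ^ ν : ℕ) : ℤ) • psiT s₂ ν (2 ^ ν) = -((s₂ : ℤ) • Psi (e2 s₂ ν) (Sum.inl 𝔰))
        - ∑ k, (Psi (e2 s₂ ν) (Sum.inr k) - psiT s₂ ν (2 ^ ν)) := by
      rw [sum_sub_distrib, sum_Psi_inr 𝔰, sum_const, card_univ, Fintype.card_fin, natCast_zsmul]
      abel
    rw [hsum]
    exact sub_mem (neg_mem (zsmul_mem hA _)) (sum_mem fun k _ => hdiff k)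
  rw [eq_top_iff, ← CompGrp.closure_range_Psi, AddSubgroup.closure_le]
  rintro _ ⟨a | k, rfl⟩
  · rw [Psi_inl_eq a 𝔰]
    exact hA
  · simpa using add_mem (hdiff k) hlast

/-- The `(ℤ/3)^{2^ν-1}`-component of the image of `Ψ (Sum.inr k)`: the `k`-th unit vector,
except `-(1, …, 1)` for the last point `k = 2^ν - 1`. -/
def inrCoord (k : Fin (2 ^ ν)) (j : Fin (2 ^ ν - 1)) : ZMod 3 :=
  (if (k : ℕ) = j then 1 else 0) - (if (k : ℕ) = 2 ^ ν - 1 then 1 else 0)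

theorem inrCoord_of_lt (j : Fin (2 ^ ν - 1)) :
    inrCoord ⟨j, by omega⟩ = Pi.single j (1 : ZMod 3) := by
  funext i
  simp [inrCoord, Pi.single_apply, Fin.ext_iff, eq_comm, show (j : ℕ) ≠ 2 ^ ν - 1 by omega]

theorem sum_inrCoord : ∑ k : Fin (2 ^ ν), inrCoord k = 0 := by
  have hcount (c : ℕ) (hc : c < 2 ^ ν) :
      ∑ k : Fin (2 ^ ν), (if (k : ℕ) = c then (1 : ZMod 3) else 0) = 1 := by
    have hk (k : Fin (2 ^ ν)) : ((k : ℕ) = c) = (k = ⟨c, hc⟩) := by rw [Fin.ext_iff]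
    simp_rw [hk, sum_ite_eq', mem_univ, if_true]
  funext j
  simp only [inrCoord, Finset.sum_apply, sum_sub_distrib, hcount j (by omega),
    hcount (2 ^ ν - 1) (by have := Nat.two_pow_pos ν; omega), sub_self, Pi.zero_apply]

variable (s₂ ν) in
def toProdVal : Sig2 s₂ ν → ZMod (3 * s₂ + 2 ^ ν) × (Fin (2 ^ ν - 1) → ZMod 3) :=
  Sum.elim (fun _ => (3, 0)) fun k => (1, inrCoord k)

theorem e2_zsmul_toProdVal (s : Sig2 s₂ ν) : e2 s₂ ν s • toProdVal s₂ ν s = (3, 0) := by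
  rcases s with a | k
  · simp [toProdVal, e2]
  · ext j
    · simp [toProdVal, e2]
    · simp [toProdVal, e2, show (3 : ZMod 3) = 0 from rfl]

theorem sum_toProdVal : ∑ s, toProdVal s₂ ν s = 0 := by
  ext j
  · have hm := ZMod.natCast_self (3 * s₂ + 2 ^ ν)
    push_cast at hm
    simp only [toProdVal, Fintype.sum_sum_type, Prod.fst_add, Prod.fst_sum, Sum.elim_inl,
      Sum.elim_inr, sum_const, card_univ, Fintype.card_fin, nsmul_eq_mul, Prod.fst_mul,
      Prod.fst_natCast, Prod.fst_zero]
    push_cast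
    linear_combination hm
  · simp [toProdVal, Fintype.sum_sum_type, Prod.snd_sum, sum_inrCoord]

variable (s₂ ν) in
noncomputable def toProd :
    CompGrp (e2 s₂ ν) →+ ZMod (3 * s₂ + 2 ^ ν) × (Fin (2 ^ ν - 1) → ZMod 3) :=
  CompGrp.lift (e2 s₂ ν) (toProdVal s₂ ν)
    (fun s t => by rw [e2_zsmul_toProdVal, e2_zsmul_toProdVal]) sum_toProdVal

theorem toProd_surjective : Function.Surjective (toProd s₂ ν) := by
  have hL := Nat.two_pow_pos ν
  set R := (toProd s₂ ν).range
  have hW (k : Fin (2 ^ ν)) : ((1 : ZMod (3 * s₂ + 2 ^ ν)), inrCoord k) ∈ R :=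
    ⟨Psi (e2 s₂ ν) (Sum.inr k), CompGrp.lift_Psi _ _ _ _ _⟩
  have h10 : ((1 : ZMod (3 * s₂ + 2 ^ ν)), (0 : Fin (2 ^ ν - 1) → ZMod 3)) ∈ R := by
    refine AddSubgroup.mem_of_zsmul_mem_of_isCoprime (isCoprime_two_pow_three ν) ?_ ?_
    · convert sum_mem (t := univ) fun k _ => hW k using 1
      ext
      · simp [Prod.fst_sum]
      · simp only [Prod.snd_sum, sum_inrCoord]
        simp
    · convert zsmul_mem (hW ⟨0, hL⟩) 3 using 1
      ext
      · simp
      · simp [show (3 : ZMod 3) = 0 from rfl]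
  have hsingle (j : Fin (2 ^ ν - 1)) :
      ((0 : ZMod (3 * s₂ + 2 ^ ν)), Pi.single j (1 : ZMod 3)) ∈ R := by
    convert sub_mem (hW ⟨j, by omega⟩) h10 using 1
    simp [inrCoord_of_lt]
  rintro ⟨a, f⟩
  have hdecomp : (a, f) = a.val • ((1 : ZMod (3 * s₂ + 2 ^ ν)), (0 : Fin (2 ^ ν - 1) → ZMod 3))
      + ∑ j, (f j).val • ((0 : ZMod (3 * s₂ + 2 ^ ν)), Pi.single j (1 : ZMod 3)) := by
    ext
    · simp [Prod.fst_sum]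
    · simp only [Prod.snd_add, Prod.snd_sum, Prod.smul_snd, smul_zero, zero_add, Finset.sum_apply,
        Pi.smul_apply, Pi.single_apply, smul_ite, sum_ite_eq, mem_univ, if_true]
      simp
  exact hdecomp ▸ add_mem (nsmul_mem h10 _) (sum_mem fun j _ => nsmul_mem (hsingle j) _)

def vOrder (s₂ ν : ℕ) (i : ℕ) : ℕ := if i = 0 then 3 * s₂ + 2 ^ ν else 3

theorem vOrder_ne_zero (i : ℕ) : vOrder s₂ ν i ≠ 0 := by
  unfold vOrder
  split_ifs <;> positivity

theorem vOrder_nsmul_vGen (𝔰 : Fin s₂) (i : ℕ) : vOrder s₂ ν i • vGen s₂ ν 𝔰 i = 0 := by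
  unfold vOrder
  split_ifs with hi
  · rw [hi, vGen_zero, card_nsmul_Psi_inl]
  · rw [← natCast_zsmul, Nat.cast_ofNat, three_zsmul_vGen 𝔰 hi]

theorem card_zmod_prod_eq_prod_vOrder :
    Nat.card (ZMod (3 * s₂ + 2 ^ ν) × (Fin (2 ^ ν - 1) → ZMod 3))
      = ∏ i : Fin (2 ^ ν), vOrder s₂ ν i := by
  have hL := Nat.two_pow_pos ν
  have hrest : ∀ i ∈ ({⟨0, hL⟩}ᶜ : Finset (Fin (2 ^ ν))), vOrder s₂ ν i = 3 :=
    fun i hi => if_neg fun h => by simp [Fin.ext_iff, h] at hi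
  rw [Nat.card_prod, Nat.card_zmod, Nat.card_pi,
    Fintype.prod_eq_mul_prod_compl (⟨0, hL⟩ : Fin (2 ^ ν)), prod_congr rfl hrest]
  simp [vOrder, card_compl]

end Sig2

theorem stmt2_general (s₂ ν : ℕ) (𝔰 : Fin s₂) :
    DirectSum.IsInternal
      (fun i : Fin (2 ^ ν) => AddSubgroup.zmultiples (vGen s₂ ν 𝔰 i.val)) ∧
    addOrderOf (vGen s₂ ν 𝔰 0) = 3 * s₂ + 2 ^ ν ∧
    (∀ i : ℕ, 1 ≤ i → i ≤ 2 ^ ν - 1 → addOrderOf (vGen s₂ ν 𝔰 i) = 3) ∧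
    Nonempty (CompGrp (e2 s₂ ν) ≃+
      ZMod (3 * s₂ + 2 ^ ν) × (Fin (2 ^ ν - 1) → ZMod 3)) := by
  have hL := Nat.two_pow_pos ν
  have : NeZero (3 * s₂ + 2 ^ ν) := ⟨by omega⟩
  obtain ⟨hint, hord, hbij⟩ := DirectSum.isInternal_zmultiples_of_surjective
    (fun i : Fin (2 ^ ν) => vGen s₂ ν 𝔰 i) (fun i => Sig2.vOrder s₂ ν i)
    (fun i => Sig2.vOrder_ne_zero i) (fun i => Sig2.vOrder_nsmul_vGen 𝔰 i)
    (Sig2.closure_range_vGen 𝔰) _ Sig2.toProd_surjective Sig2.card_zmod_prod_eq_prod_vOrder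
  refine ⟨hint, hord ⟨0, hL⟩, fun i hi1 hi2 => ?_, ⟨AddEquiv.ofBijective _ hbij⟩⟩
  exact (hord ⟨i, by omega⟩).trans (if_neg (show i ≠ 0 by omega))

/-- `G(Σ, e)` is the internal direct sum `B₀ ⊕ B₁ ⊕ ⋯ ⊕ B_{2^ν - 1}`,
where `B₀ = ⟨Ψ 𝔰⟩` (any fixed `𝔰 ∈ Σ₂`) is cyclic of order `m = 3 s₂ + 2^ν` and each
`B_i = ⟨v_i⟩` (`1 ≤ i ≤ 2^ν - 1`) is cyclic of order `3`; in particular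
`G(Σ, e) ≃ ℤ/mℤ ⊕ (ℤ/3ℤ)^{2^ν - 1}`. -/
theorem stmt2 (s₂ ν : ℕ) (hs : 1 ≤ s₂) (hν : 1 ≤ ν) (𝔰 : Fin s₂) :
    DirectSum.IsInternal
      (fun i : Fin (2 ^ ν) => AddSubgroup.zmultiples (vGen s₂ ν 𝔰 i.val)) ∧
    addOrderOf (vGen s₂ ν 𝔰 0) = 3 * s₂ + 2 ^ ν ∧
    (∀ i : ℕ, 1 ≤ i → i ≤ 2 ^ ν - 1 → addOrderOf (vGen s₂ ν 𝔰 i) = 3) ∧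
    Nonempty (CompGrp (e2 s₂ ν) ≃+
      ZMod (3 * s₂ + 2 ^ ν) × (Fin (2 ^ ν - 1) → ZMod 3)) :=
  stmt2_general s₂ ν 𝔰
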